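/- arXiv:1903.06446 — 2 statements merged into one kernel-verified Lean document; each statement's English description precedes it below -/
import Mathlib

section
/- For H ∈ L²(ℝ), the function σ(τ₁,τ₂) = σ(|τ₁−τ₂|), with σ(τ)² = ∫ |H*(λ)|² sin²(τλ/2) dλ, is a pseudometric on ℝ; moreover, if H*(λ) ≠ 0 on a set of positive Lebesgue measure, then σ is a metric. -/
/-!
With `w_τ(λ) = ‖H*(λ)‖ |sin(τλ/2)|` we have `σ(τ₁, τ₂) = ‖w_{τ₁-τ₂}‖_{L²}`. Since
`|sin(x + y)| ≤ |sin x| + |sin y|`, the weights satisfy `w_{a+b} ≤ w_a + w_b` pointwise, so the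
triangle inequality is Minkowski's inequality in `L²`. For `τ ≠ 0` the zeros of `sin(τλ/2)` form a
countable set, so `w_τ = 0` almost everywhere forces `H* = 0` almost everywhere.
-/

open MeasureTheory Real

section L2

variable {α : Type*} [MeasurableSpace α] {μ : Measure α}

lemma sqrt_integral_sq_eq_norm_toLp {f : α → ℝ} (hf : MemLp f 2 μ) :
    √(∫ x, f x ^ 2 ∂μ) = ‖hf.toLp f‖ := by
  have h_inner : ‖hf.toLp f‖ ^ 2 = ∫ x, hf.toLp f x * hf.toLp f x ∂μ := by
    rw [← real_inner_self_eq_norm_sq, L2.inner_def]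
    simp [sq]
  have h_coe : ∫ x, hf.toLp f x * hf.toLp f x ∂μ = ∫ x, f x ^ 2 ∂μ := by
    refine integral_congr_ae ?_
    filter_upwards [hf.coeFn_toLp] with x hx
    rw [hx, sq]
  rw [← h_coe, ← h_inner, sqrt_sq (norm_nonneg _)]

lemma sqrt_integral_sq_add_le {f g : α → ℝ} (hf : MemLp f 2 μ) (hg : MemLp g 2 μ) :
    √(∫ x, (f x + g x) ^ 2 ∂μ) ≤ √(∫ x, f x ^ 2 ∂μ) + √(∫ x, g x ^ 2 ∂μ) := by
  have hfg : MemLp (f + g) 2 μ := hf.add hg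
  calc √(∫ x, (f x + g x) ^ 2 ∂μ)
      = ‖hfg.toLp (f + g)‖ := sqrt_integral_sq_eq_norm_toLp hfg
    _ = ‖hf.toLp f + hg.toLp g‖ := by rw [MemLp.toLp_add]
    _ ≤ ‖hf.toLp f‖ + ‖hg.toLp g‖ := norm_add_le _ _
    _ = √(∫ x, f x ^ 2 ∂μ) + √(∫ x, g x ^ 2 ∂μ) := by
      rw [sqrt_integral_sq_eq_norm_toLp hf, sqrt_integral_sq_eq_norm_toLp hg]

lemma sqrt_integral_sq_mono {f g : α → ℝ} (hf : MemLp f 2 μ) (hg : MemLp g 2 μ)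
    (hf_nonneg : ∀ x, 0 ≤ f x) (hfg : ∀ x, f x ≤ g x) :
    √(∫ x, f x ^ 2 ∂μ) ≤ √(∫ x, g x ^ 2 ∂μ) :=
  sqrt_le_sqrt <| integral_mono hf.integrable_sq hg.integrable_sq fun x =>
    pow_le_pow_left₀ (hf_nonneg x) (hfg x) 2

end L2

lemma abs_sin_add_le (x y : ℝ) : |sin (x + y)| ≤ |sin x| + |sin y| := by
  rw [sin_add]
  calc |sin x * cos y + cos x * sin y|
      ≤ |sin x| * |cos y| + |cos x| * |sin y| := by
        rw [← abs_mul, ← abs_mul]; exact abs_add_le _ _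
    _ ≤ |sin x| + |sin y| := by
        gcongr
        · exact mul_le_of_le_one_right (abs_nonneg _) (abs_cos_le_one _)
        · exact mul_le_of_le_one_left (abs_nonneg _) (abs_cos_le_one _)

lemma volume_setOf_sin_mul_div_two_eq_zero {τ : ℝ} (hτ : τ ≠ 0) :
    volume {l : ℝ | sin (τ * l / 2) = 0} = 0 := by
  refine measure_mono_null ?_ ((Set.countable_range fun n : ℤ => 2 * n * π / τ).measure_zero _)
  intro l hl
  obtain ⟨n, hn⟩ := sin_eq_zero_iff.mp hl
  exact ⟨n, by field_simp; linarith⟩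

section SinWeight

variable {E : Type*} [NormedAddCommGroup E] (Hstar : ℝ → E)

/-- The function whose `L²` norm is `σ(τ)`. -/
noncomputable def sinWeight (τ l : ℝ) : ℝ := ‖Hstar l‖ * |sin (τ * l / 2)|

lemma sinWeight_nonneg (τ l : ℝ) : 0 ≤ sinWeight Hstar τ l := by
  unfold sinWeight; positivity

lemma sinWeight_zero : sinWeight Hstar 0 = 0 := by
  ext l; simp [sinWeight]

lemma sinWeight_add_le (a b l : ℝ) :
    sinWeight Hstar (a + b) l ≤ sinWeight Hstar a l + sinWeight Hstar b l := by
  unfold sinWeight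
  rw [← mul_add, add_mul, add_div]
  exact mul_le_mul_of_nonneg_left (abs_sin_add_le _ _) (norm_nonneg _)

lemma sq_sinWeight_abs (τ l : ℝ) :
    sinWeight Hstar |τ| l ^ 2 = sinWeight Hstar τ l ^ 2 := by
  rcases abs_choice τ with h | h <;> simp [h, sinWeight, mul_pow, neg_mul, neg_div]

variable {Hstar}

lemma MeasureTheory.MemLp.sinWeight (hH : MemLp Hstar 2 volume) (τ : ℝ) : MemLp (sinWeight Hstar τ) 2 volume := by
  refine hH.norm.of_le (hH.1.norm.mul (by fun_prop : Continuous _).aestronglyMeasurable) ?_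
  filter_upwards with l
  rw [norm_norm, Real.norm_of_nonneg (sinWeight_nonneg Hstar τ l)]
  exact mul_le_of_le_one_right (norm_nonneg _) (abs_sin_le_one _)

lemma sqrt_integral_sq_sinWeight_add_le (hH : MemLp Hstar 2 volume) (a b : ℝ) :
    √(∫ l, sinWeight Hstar (a + b) l ^ 2) ≤
      √(∫ l, sinWeight Hstar a l ^ 2) + √(∫ l, sinWeight Hstar b l ^ 2) :=
  (sqrt_integral_sq_mono (hH.sinWeight _) ((hH.sinWeight a).add (hH.sinWeight b))
    (sinWeight_nonneg Hstar _) (sinWeight_add_le Hstar a b)).trans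
    (sqrt_integral_sq_add_le (hH.sinWeight a) (hH.sinWeight b))

lemma ae_eq_zero_of_integral_sq_sinWeight_eq_zero (hH : MemLp Hstar 2 volume) {τ : ℝ}
    (hτ : τ ≠ 0) (h : ∫ l, sinWeight Hstar τ l ^ 2 = 0) : Hstar =ᵐ[volume] 0 := by
  have h_weight : ∀ᵐ l, sinWeight Hstar τ l ^ 2 = 0 :=
    (integral_eq_zero_iff_of_nonneg (fun _ => sq_nonneg _) (hH.sinWeight τ).integrable_sq).mp h
  have h_sin : ∀ᵐ l, sin (τ * l / 2) ≠ 0 := by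
    simpa [ae_iff] using volume_setOf_sin_mul_div_two_eq_zero hτ
  filter_upwards [h_weight, h_sin] with l hw hs
  simpa [sinWeight, hs] using hw

end SinWeight

theorem sigma_pseudometric_general
    (Hstar : ℝ → ℂ)
    (hHstar : MemLp Hstar 2 (volume : Measure ℝ))
    (σ : ℝ → ℝ → ℝ)
    (hσ : ∀ τ₁ τ₂ : ℝ, σ τ₁ τ₂ =
      Real.sqrt (∫ l : ℝ, ‖Hstar l‖ ^ 2 * Real.sin (|τ₁ - τ₂| * l / 2) ^ 2)) :
    (∀ τ : ℝ, σ τ τ = 0) ∧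
    (∀ τ₁ τ₂ : ℝ, 0 ≤ σ τ₁ τ₂) ∧
    (∀ τ₁ τ₂ : ℝ, σ τ₁ τ₂ = σ τ₂ τ₁) ∧
    (∀ τ₁ τ₂ τ₃ : ℝ, σ τ₁ τ₃ ≤ σ τ₁ τ₂ + σ τ₂ τ₃) ∧
    (0 < volume {l : ℝ | Hstar l ≠ 0} →
      ∀ τ₁ τ₂ : ℝ, σ τ₁ τ₂ = 0 → τ₁ = τ₂) := by
  have hσ' (τ₁ τ₂ : ℝ) : σ τ₁ τ₂ = √(∫ l, sinWeight Hstar (τ₁ - τ₂) l ^ 2) := by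
    simp_rw [hσ, ← sq_sinWeight_abs Hstar (τ₁ - τ₂), sinWeight, mul_pow, sq_abs]
  refine ⟨fun τ => ?_, fun _ _ => by rw [hσ]; positivity,
    fun _ _ => by rw [hσ, hσ, abs_sub_comm], fun τ₁ τ₂ τ₃ => ?_, fun hpos τ₁ τ₂ h => ?_⟩
  · simp [hσ', sinWeight_zero]
  · rw [hσ', hσ', hσ', ← sub_add_sub_cancel τ₁ τ₂ τ₃]
    exact sqrt_integral_sq_sinWeight_add_le hHstar _ _
  · by_contra hne
    rw [hσ', sqrt_eq_zero (integral_nonneg fun _ => sq_nonneg _)] at h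
    have h_null := ae_eq_zero_of_integral_sq_sinWeight_eq_zero hHstar (sub_ne_zero.mpr hne) h
    rw [Filter.EventuallyEq, ae_iff] at h_null
    exact hpos.ne' h_null

/-- σ(τ₁,τ₂) = σ(|τ₁−τ₂|), with σ(τ)² = ∫ |H*(λ)|² sin²(τλ/2) dλ,
is a pseudometric on ℝ; if moreover H* ≠ 0 on a set of positive Lebesgue
measure, then σ is a metric. -/
theorem sigma_pseudometric
    (H : ℝ → ℝ) (Hstar : ℝ → ℂ)
    (hH : MemLp H 2 (volume : Measure ℝ))
    (hHstar : MemLp Hstar 2 (volume : Measure ℝ))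
    (σ : ℝ → ℝ → ℝ)
    (hσ : ∀ τ₁ τ₂ : ℝ, σ τ₁ τ₂ =
      Real.sqrt (∫ l : ℝ, ‖Hstar l‖ ^ 2 * Real.sin (|τ₁ - τ₂| * l / 2) ^ 2)) :
    (∀ τ : ℝ, σ τ τ = 0) ∧
    (∀ τ₁ τ₂ : ℝ, 0 ≤ σ τ₁ τ₂) ∧
    (∀ τ₁ τ₂ : ℝ, σ τ₁ τ₂ = σ τ₂ τ₁) ∧
    (∀ τ₁ τ₂ τ₃ : ℝ, σ τ₁ τ₃ ≤ σ τ₁ τ₂ + σ τ₂ τ₃) ∧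
    (0 < volume {l : ℝ | Hstar l ≠ 0} →
      ∀ τ₁ τ₂ : ℝ, σ τ₁ τ₂ = 0 → τ₁ = τ₂) :=
  sigma_pseudometric_general Hstar hHstar σ hσ
end

section
/- Let Z be a zero-mean Gaussian process with covariance C_∞(τ₁,τ₂) = (1/2π)∫ [e^{i(τ₁−τ₂)λ}|H*(λ)|² + e^{i(τ₁+τ₂)λ}(H*(λ))²] dλ, H ∈ L²(ℝ). Then d_Z(τ₁,τ₂)² := C_∞(τ₁,τ₁) − 2C_∞(τ₁,τ₂) + C_∞(τ₂,τ₂) ≤ (4/π)∫ |H*(λ)|² sin²((τ₂−τ₁)λ/2) dλ for all τ₁, τ₂ ∈ ℝ. -/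
/-!
Put `a = e^{iτ₁λ}`, `b = e^{iτ₂λ}` and `w = H*(λ)`. The second difference of the integrand of
`C_∞` is `(2 - 2 a b⁻¹) |w|² + (a - b)² w²`. The real part of the first term is
`|a - b|² |w|²`, and the second term has modulus `|a - b|² |w|²`, so the real part is at most
`2 |a - b|² |w|² = 8 sin²((τ₂ - τ₁)λ/2) |w|²`; integrate and multiply by `1/2π`.
-/

open MeasureTheory

noncomputable def spectralCovIntegrand (F : ℝ → ℂ) (σ₁ σ₂ l : ℝ) : ℂ :=
  Complex.exp (Complex.I * (σ₁ - σ₂) * l) * (‖F l‖ ^ 2 : ℂ) +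
    Complex.exp (Complex.I * (σ₁ + σ₂) * l) * (F l) ^ 2

namespace Complex

theorem norm_exp_I_mul_ofReal_sub_exp_sq (x y : ℝ) :
    ‖exp (I * x) - exp (I * y)‖ ^ 2 = 4 * Real.sin ((y - x) / 2) ^ 2 := by
  have hfactor : exp (I * y) - exp (I * x) = exp (I * x) * (exp (I * ↑(y - x)) - 1) := by
    rw [mul_sub, mul_one, ← exp_add]; push_cast; ring_nf
  rw [← norm_neg, neg_sub, hfactor, norm_mul, norm_exp_I_mul_ofReal, one_mul,
    norm_exp_I_mul_ofReal_sub_one, norm_mul, mul_pow, Real.norm_eq_abs, sq_abs]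
  norm_num

theorem re_two_sub_two_exp_I_mul_ofReal (x : ℝ) :
    (2 - 2 * exp (I * x)).re = 4 * Real.sin (x / 2) ^ 2 := by
  rw [Real.sin_sq_eq_half_sub, mul_div_cancel₀ x two_ne_zero, mul_comm I]
  simp only [sub_re, re_ofNat, mul_re, exp_ofReal_mul_I_re, im_ofNat, exp_ofReal_mul_I_im,
    zero_mul, sub_zero]
  ring

theorem _root_.MeasureTheory.Integrable.exp_I_mul_ofReal_mul {u : ℝ → ℂ} (hu : Integrable u)
    (c : ℝ) : Integrable (fun l : ℝ => exp (I * c * l) * u l) :=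
  hu.bdd_mul (c := 1) (by fun_prop) (ae_of_all _ fun l => by
    rw [mul_assoc, ← ofReal_mul, norm_exp_I_mul_ofReal])

end Complex

theorem integrable_spectralCovIntegrand {F : ℝ → ℂ} (hF : MemLp F 2) (σ₁ σ₂ : ℝ) :
    Integrable (spectralCovIntegrand F σ₁ σ₂) := by
  have hnorm : Integrable (fun l => (‖F l‖ ^ 2 : ℂ)) := by
    simpa using ((memLp_two_iff_integrable_sq_norm hF.1).1 hF).ofReal (𝕜 := ℂ)
  have hsq : Integrable (fun l => F l ^ 2) :=
    (hF.integrable_mul hF).congr (ae_of_all _ fun l => (sq (F l)).symm)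
  have hdiff := hnorm.exp_I_mul_ofReal_mul (σ₁ - σ₂)
  have hsum := hsq.exp_I_mul_ofReal_mul (σ₁ + σ₂)
  push_cast at hdiff hsum
  exact hdiff.add hsum

open Complex in
theorem spectralCovIntegrand_secondDiff (F : ℝ → ℂ) (τ₁ τ₂ l : ℝ) :
    spectralCovIntegrand F τ₁ τ₁ l - 2 * spectralCovIntegrand F τ₁ τ₂ l +
        spectralCovIntegrand F τ₂ τ₂ l =
      (2 - 2 * exp (I * (τ₁ - τ₂) * l)) * (‖F l‖ ^ 2 : ℂ) +
        (exp (I * τ₁ * l) - exp (I * τ₂ * l)) ^ 2 * F l ^ 2 := by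
  have hexp (σ₁ σ₂ : ℝ) : exp (I * (σ₁ + σ₂) * l) = exp (I * σ₁ * l) * exp (I * σ₂ * l) := by
    rw [← exp_add]; ring_nf
  simp only [spectralCovIntegrand, sub_self, mul_zero, zero_mul, exp_zero, hexp]
  ring

open Complex in
theorem re_spectralCovIntegrand_secondDiff_le (F : ℝ → ℂ) (τ₁ τ₂ l : ℝ) :
    (spectralCovIntegrand F τ₁ τ₁ l - 2 * spectralCovIntegrand F τ₁ τ₂ l +
        spectralCovIntegrand F τ₂ τ₂ l).re ≤
      8 * (‖F l‖ ^ 2 * Real.sin ((τ₂ - τ₁) * l / 2) ^ 2) := by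
  have hcast (σ : ℝ) : I * σ * l = I * ↑(σ * l) := by push_cast; ring
  have hdiag : ((2 - 2 * exp (I * (τ₁ - τ₂) * l)) * (‖F l‖ ^ 2 : ℂ)).re =
      4 * Real.sin ((τ₂ - τ₁) * l / 2) ^ 2 * ‖F l‖ ^ 2 := by
    rw [← ofReal_sub, hcast, ← ofReal_pow, re_mul_ofReal, re_two_sub_two_exp_I_mul_ofReal,
      ← neg_sq, ← Real.sin_neg]
    ring_nf
  have hoff : ((exp (I * τ₁ * l) - exp (I * τ₂ * l)) ^ 2 * F l ^ 2).re ≤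
      4 * Real.sin ((τ₂ - τ₁) * l / 2) ^ 2 * ‖F l‖ ^ 2 := by
    refine (re_le_norm _).trans_eq ?_
    rw [norm_mul, norm_pow, norm_pow, hcast, hcast, norm_exp_I_mul_ofReal_sub_exp_sq]
    ring_nf
  rw [spectralCovIntegrand_secondDiff, add_re, hdiag]
  linarith

theorem integrable_spectralCovIntegrand_secondDiff {F : ℝ → ℂ} (hF : MemLp F 2) (τ₁ τ₂ : ℝ) :
    Integrable fun l => spectralCovIntegrand F τ₁ τ₁ l - 2 * spectralCovIntegrand F τ₁ τ₂ l +
      spectralCovIntegrand F τ₂ τ₂ l :=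
  have hK := integrable_spectralCovIntegrand hF
  ((hK τ₁ τ₁).sub ((hK τ₁ τ₂).const_mul 2)).add (hK τ₂ τ₂)

theorem integral_re_spectralCovIntegrand_secondDiff {F : ℝ → ℂ} (hF : MemLp F 2) (τ₁ τ₂ : ℝ) :
    ∫ l, (spectralCovIntegrand F τ₁ τ₁ l - 2 * spectralCovIntegrand F τ₁ τ₂ l +
        spectralCovIntegrand F τ₂ τ₂ l).re =
      (∫ l, spectralCovIntegrand F τ₁ τ₁ l).re - 2 * (∫ l, spectralCovIntegrand F τ₁ τ₂ l).re +
        (∫ l, spectralCovIntegrand F τ₂ τ₂ l).re := by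
  have hK := integrable_spectralCovIntegrand hF
  have h12 := (hK τ₁ τ₂).const_mul 2
  have hdiff : Integrable fun l =>
      spectralCovIntegrand F τ₁ τ₁ l - 2 * spectralCovIntegrand F τ₁ τ₂ l :=
    (hK τ₁ τ₁).sub h12
  refine (integral_re (integrable_spectralCovIntegrand_secondDiff hF τ₁ τ₂)).trans ?_
  rw [integral_add hdiff (hK τ₂ τ₂), integral_sub (hK τ₁ τ₁) h12, integral_const_mul]
  simp

theorem integrable_norm_sq_mul_sin_sq {F : ℝ → ℂ} (hF : MemLp F 2) (c : ℝ) :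
    Integrable (fun l => ‖F l‖ ^ 2 * Real.sin (c * l / 2) ^ 2) :=
  ((memLp_two_iff_integrable_sq_norm hF.1).1 hF).mul_bdd (c := 1) (by fun_prop)
    (ae_of_all _ fun l => by simpa using Real.sin_sq_le_one (c * l / 2))

theorem dZ_le_sigma_general
    (Hstar : ℝ → ℂ)
    (hHstar : MemLp Hstar 2 (volume : Measure ℝ))
    (Cinf : ℝ → ℝ → ℝ)
    (hC : ∀ τ₁ τ₂ : ℝ, Cinf τ₁ τ₂ =
      (1 / (2 * Real.pi)) *
        (∫ l : ℝ, Complex.exp (Complex.I * (τ₁ - τ₂) * l) * (‖Hstar l‖ ^ 2 : ℂ) +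
          Complex.exp (Complex.I * (τ₁ + τ₂) * l) * (Hstar l) ^ 2).re) :
    ∀ τ₁ τ₂ : ℝ,
      Cinf τ₁ τ₁ - 2 * Cinf τ₁ τ₂ + Cinf τ₂ τ₂ ≤
        (4 / Real.pi) *
          ∫ l : ℝ, ‖Hstar l‖ ^ 2 * Real.sin ((τ₂ - τ₁) * l / 2) ^ 2 := by
  intro τ₁ τ₂
  set K := spectralCovIntegrand Hstar
  have hCK : ∀ σ₁ σ₂, Cinf σ₁ σ₂ = 1 / (2 * Real.pi) * (∫ l, K σ₁ σ₂ l).re := hC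
  calc Cinf τ₁ τ₁ - 2 * Cinf τ₁ τ₂ + Cinf τ₂ τ₂
      = 1 / (2 * Real.pi) * ∫ l, (K τ₁ τ₁ l - 2 * K τ₁ τ₂ l + K τ₂ τ₂ l).re := by
        rw [hCK, hCK, hCK, integral_re_spectralCovIntegrand_secondDiff hHstar]
        ring
    _ ≤ 1 / (2 * Real.pi) * ∫ l, 8 * (‖Hstar l‖ ^ 2 * Real.sin ((τ₂ - τ₁) * l / 2) ^ 2) := by
        refine mul_le_mul_of_nonneg_left (integral_mono ?_ ?_ ?_) (by positivity)
        · exact (integrable_spectralCovIntegrand_secondDiff hHstar τ₁ τ₂).re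
        · exact (integrable_norm_sq_mul_sin_sq hHstar _).const_mul 8
        · exact re_spectralCovIntegrand_secondDiff_le Hstar τ₁ τ₂
    _ = (4 / Real.pi) * ∫ l, ‖Hstar l‖ ^ 2 * Real.sin ((τ₂ - τ₁) * l / 2) ^ 2 := by
        rw [integral_const_mul]
        field_simp
        ring

/-- The canonical pseudometric of the limiting Gaussian process Z,
d_Z(τ₁,τ₂)² = C_∞(τ₁,τ₁) − 2C_∞(τ₁,τ₂) + C_∞(τ₂,τ₂), is bounded by
(4/π)∫ |H*(λ)|² sin²((τ₂−τ₁)λ/2) dλ. -/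
theorem dZ_le_sigma
    (H : ℝ → ℝ) (Hstar : ℝ → ℂ)
    (hH : MemLp H 2 (volume : Measure ℝ))
    (hHstar : MemLp Hstar 2 (volume : Measure ℝ))
    (hconj : ∀ l : ℝ, Hstar (-l) = starRingEnd ℂ (Hstar l))
    (Cinf : ℝ → ℝ → ℝ)
    (hC : ∀ τ₁ τ₂ : ℝ, Cinf τ₁ τ₂ =
      (1 / (2 * Real.pi)) *
        (∫ l : ℝ, Complex.exp (Complex.I * (τ₁ - τ₂) * l) * (‖Hstar l‖ ^ 2 : ℂ) +
          Complex.exp (Complex.I * (τ₁ + τ₂) * l) * (Hstar l) ^ 2).re) :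
    ∀ τ₁ τ₂ : ℝ,
      Cinf τ₁ τ₁ - 2 * Cinf τ₁ τ₂ + Cinf τ₂ τ₂ ≤
        (4 / Real.pi) *
          ∫ l : ℝ, ‖Hstar l‖ ^ 2 * Real.sin ((τ₂ - τ₁) * l / 2) ^ 2 :=
  dZ_le_sigma_general Hstar hHstar Cinf hC
end
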